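/- Let c2, c3, c4, c5 be real constants with c5 ≠ 0, let w : ℝ → ℝ be three times differentiable with w > 0 everywhere, and let h : ℝ → ℝ satisfy h'(z) = √(w(h(z))) for all z. If h satisfies c5·h'''' + c4·h''' + c3·h'' + h² − c2·h = 0 on ℝ, then for all z: 2·c5·w(h(z))·w'''(h(z)) + (c5·w'(h(z)) + 2·c4·√(w(h(z))))·w''(h(z)) + 2·c3·w'(h(z)) + 4·h(z)² − 4·c2·h(z) = 0. -/

import Mathlib

/-! If `h' = √(w ∘ h)` with `w > 0`, the chain rule turns every further derivative of `h` into a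
polynomial in `w ∘ h`, its derivatives and `√(w ∘ h)`: `h'' = w'(h)/2`, `h''' = w''(h) √(w(h))/2`
and, since `√(w(h))² = w(h)`, `h'''' = (w'''(h) w(h) + w''(h) w'(h)/2)/2`. Substituting these into
the fourth-order equation and multiplying by `4` gives the third-order equation for `w`. -/

open Real

section SqrtFlow

variable {w h : ℝ → ℝ}

theorem hasDerivAt_of_deriv_eq_sqrt (hwpos : ∀ s, 0 < w s)
    (hh : ∀ z, deriv h z = √(w (h z))) (z : ℝ) : HasDerivAt h (√(w (h z))) z := by
  have hne : deriv h z ≠ 0 := by rw [hh z]; exact (sqrt_pos.mpr (hwpos (h z))).ne'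
  simpa only [hh z] using (differentiableAt_of_deriv_ne_zero hne).hasDerivAt

theorem hasDerivAt_comp_of_hasDerivAt_sqrt {f : ℝ → ℝ} (hf : Differentiable ℝ f)
    (hh : ∀ z, HasDerivAt h (√(w (h z))) z) (z : ℝ) :
    HasDerivAt (fun t => f (h t)) (deriv f (h z) * √(w (h z))) z :=
  (hf (h z)).hasDerivAt.comp z (hh z)

theorem hasDerivAt_sqrt_comp_of_hasDerivAt_sqrt (hw : Differentiable ℝ w) (hwpos : ∀ s, 0 < w s)
    (hh : ∀ z, HasDerivAt h (√(w (h z))) z) (z : ℝ) :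
    HasDerivAt (fun t => √(w (h t))) (deriv w (h z) / 2) z := by
  have hne : √(w (h z)) ≠ 0 := (sqrt_pos.mpr (hwpos (h z))).ne'
  convert (hasDerivAt_comp_of_hasDerivAt_sqrt hw hh z).sqrt (hwpos (h z)).ne' using 1
  field_simp

theorem iteratedDeriv_two_of_hasDerivAt_sqrt (hw : Differentiable ℝ w) (hwpos : ∀ s, 0 < w s)
    (hh : ∀ z, HasDerivAt h (√(w (h z))) z) :
    iteratedDeriv 2 h = fun z => deriv w (h z) / 2 := by
  have hderiv : deriv h = fun z => √(w (h z)) := funext fun z => (hh z).deriv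
  funext z
  rw [iteratedDeriv_succ, iteratedDeriv_one, hderiv]
  exact (hasDerivAt_sqrt_comp_of_hasDerivAt_sqrt hw hwpos hh z).deriv

theorem iteratedDeriv_three_of_hasDerivAt_sqrt (hw : ContDiff ℝ 2 w) (hwpos : ∀ s, 0 < w s)
    (hh : ∀ z, HasDerivAt h (√(w (h z))) z) :
    iteratedDeriv 3 h = fun z => iteratedDeriv 2 w (h z) * √(w (h z)) / 2 := by
  have hw' : Differentiable ℝ (deriv w) := by
    simpa only [iteratedDeriv_one] using hw.differentiable_iteratedDeriv' 1
  funext z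
  rw [iteratedDeriv_succ, iteratedDeriv_two_of_hasDerivAt_sqrt (hw.differentiable (by norm_num))
    hwpos hh]
  rw [iteratedDeriv_succ, iteratedDeriv_one]
  exact ((hasDerivAt_comp_of_hasDerivAt_sqrt hw' hh z).div_const 2).deriv

theorem iteratedDeriv_four_of_hasDerivAt_sqrt (hw : ContDiff ℝ 3 w) (hwpos : ∀ s, 0 < w s)
    (hh : ∀ z, HasDerivAt h (√(w (h z))) z) (z : ℝ) :
    iteratedDeriv 4 h z
      = (iteratedDeriv 3 w (h z) * w (h z) + iteratedDeriv 2 w (h z) * deriv w (h z) / 2) / 2 := by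
  have hw'' : Differentiable ℝ (iteratedDeriv 2 w) := hw.differentiable_iteratedDeriv' 2
  have hprod := ((hasDerivAt_comp_of_hasDerivAt_sqrt hw'' hh z).mul
    (hasDerivAt_sqrt_comp_of_hasDerivAt_sqrt (hw.differentiable (by norm_num)) hwpos hh z)).div_const 2
  rw [iteratedDeriv_succ, iteratedDeriv_three_of_hasDerivAt_sqrt (hw.of_le (by norm_num)) hwpos hh]
  refine hprod.deriv.trans ?_
  rw [← iteratedDeriv_succ, mul_assoc, mul_self_sqrt (hwpos (h z)).le]
  ring

end SqrtFlow

theorem stmt_15_general (c2 c3 c4 c5 : ℝ)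
    (w : ℝ → ℝ) (hw : ContDiff ℝ 3 w) (hwpos : ∀ s : ℝ, 0 < w s)
    (h : ℝ → ℝ) (hh : ∀ z : ℝ, deriv h z = Real.sqrt (w (h z)))
    (hode : ∀ z : ℝ, c5 * iteratedDeriv 4 h z + c4 * iteratedDeriv 3 h z
      + c3 * iteratedDeriv 2 h z + (h z) ^ 2 - c2 * h z = 0) :
    ∀ z : ℝ,
      2 * c5 * w (h z) * iteratedDeriv 3 w (h z)
        + (c5 * deriv w (h z) + 2 * c4 * Real.sqrt (w (h z))) * iteratedDeriv 2 w (h z)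
        + 2 * c3 * deriv w (h z)
        + 4 * (h z) ^ 2 - 4 * c2 * h z = 0 := by
  intro z
  have hh' := hasDerivAt_of_deriv_eq_sqrt hwpos hh
  have hode_z := hode z
  rw [iteratedDeriv_four_of_hasDerivAt_sqrt hw hwpos hh',
    iteratedDeriv_three_of_hasDerivAt_sqrt (hw.of_le (by norm_num)) hwpos hh',
    iteratedDeriv_two_of_hasDerivAt_sqrt (hw.differentiable (by norm_num)) hwpos hh'] at hode_z
  linear_combination 4 * hode_z

theorem stmt_15 (c2 c3 c4 c5 : ℝ) (hc5 : c5 ≠ 0)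
    (w : ℝ → ℝ) (hw : ContDiff ℝ 3 w) (hwpos : ∀ s : ℝ, 0 < w s)
    (h : ℝ → ℝ) (hh : ∀ z : ℝ, deriv h z = Real.sqrt (w (h z)))
    (hode : ∀ z : ℝ, c5 * iteratedDeriv 4 h z + c4 * iteratedDeriv 3 h z
      + c3 * iteratedDeriv 2 h z + (h z) ^ 2 - c2 * h z = 0) :
    ∀ z : ℝ,
      2 * c5 * w (h z) * iteratedDeriv 3 w (h z)
        + (c5 * deriv w (h z) + 2 * c4 * Real.sqrt (w (h z))) * iteratedDeriv 2 w (h z)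
        + 2 * c3 * deriv w (h z)
        + 4 * (h z) ^ 2 - 4 * c2 * h z = 0 :=
  stmt_15_general c2 c3 c4 c5 w hw hwpos h hh hode
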